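/- Let A be a pseudo-amenable Banach algebra with approximate diagonal (u_i), and let J be a closed left ideal of A. If J is boundedly approximately complemented in A, then J has a right approximate identity. -/

import Mathlib

open Filter Topology TensorProduct

noncomputable section


open Filter Topology TensorProduct


/-! Banach bimodules and derivations -/

variable (A : Type) [NonUnitalNormedRing A] [NormedSpace ℂ A]
  [IsScalarTower ℂ A A] [SMulCommClass ℂ A A]

/-- A Banach `A`-bimodule structure on a Banach space `X`: `l a` is the left action of `a`,
`r a` is the right action of `a`. -/
structure BanachBimod (X : Type) [NormedAddCommGroup X] [NormedSpace ℂ X] where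
  l : A → X →L[ℂ] X
  r : A → X →L[ℂ] X
  l_add : ∀ a b, l (a + b) = l a + l b
  l_smul : ∀ (c : ℂ) a, l (c • a) = c • l a
  r_add : ∀ a b, r (a + b) = r a + r b
  r_smul : ∀ (c : ℂ) a, r (c • a) = c • r a
  l_bound : ∃ C : ℝ, ∀ a, ‖l a‖ ≤ C * ‖a‖
  r_bound : ∃ C : ℝ, ∀ a, ‖r a‖ ≤ C * ‖a‖
  l_mul : ∀ a b, l (a * b) = (l a).comp (l b)
  r_mul : ∀ a b, r (a * b) = (r b).comp (r a)
  lr_comm : ∀ a b, (l a).comp (r b) = (r b).comp (l a)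

variable {A}

namespace BanachBimod

variable {X : Type} [NormedAddCommGroup X] [NormedSpace ℂ X]

/-- The dual bimodule structure on `X →L[ℂ] ℂ`. -/
def dual (M : BanachBimod A X) : BanachBimod A (X →L[ℂ] ℂ) where
  l a := (ContinuousLinearMap.compL ℂ X X ℂ).flip (M.r a)
  r a := (ContinuousLinearMap.compL ℂ X X ℂ).flip (M.l a)
  l_add a b := by simp only [M.r_add, map_add]
  l_smul c a := by simp only [M.r_smul, map_smul]
  r_add a b := by simp only [M.l_add, map_add]
  r_smul c a := by simp only [M.l_smul, map_smul]
  l_bound := by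
    obtain ⟨C, hC⟩ := M.r_bound
    refine ⟨‖(ContinuousLinearMap.compL ℂ X X ℂ).flip‖ * C, fun a => ?_⟩
    calc ‖(ContinuousLinearMap.compL ℂ X X ℂ).flip (M.r a)‖
        ≤ ‖(ContinuousLinearMap.compL ℂ X X ℂ).flip‖ * ‖M.r a‖ :=
          (ContinuousLinearMap.compL ℂ X X ℂ).flip.le_opNorm _
      _ ≤ ‖(ContinuousLinearMap.compL ℂ X X ℂ).flip‖ * (C * ‖a‖) := by
          exact mul_le_mul_of_nonneg_left (hC a) (norm_nonneg _)
      _ = ‖(ContinuousLinearMap.compL ℂ X X ℂ).flip‖ * C * ‖a‖ := by ring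
  r_bound := by
    obtain ⟨C, hC⟩ := M.l_bound
    refine ⟨‖(ContinuousLinearMap.compL ℂ X X ℂ).flip‖ * C, fun a => ?_⟩
    calc ‖(ContinuousLinearMap.compL ℂ X X ℂ).flip (M.l a)‖
        ≤ ‖(ContinuousLinearMap.compL ℂ X X ℂ).flip‖ * ‖M.l a‖ :=
          (ContinuousLinearMap.compL ℂ X X ℂ).flip.le_opNorm _
      _ ≤ ‖(ContinuousLinearMap.compL ℂ X X ℂ).flip‖ * (C * ‖a‖) := by
          exact mul_le_mul_of_nonneg_left (hC a) (norm_nonneg _)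
      _ = ‖(ContinuousLinearMap.compL ℂ X X ℂ).flip‖ * C * ‖a‖ := by ring
  l_mul a b := by
    ext φ x
    simp [M.r_mul]
  r_mul a b := by
    ext φ x
    simp [M.l_mul]
  lr_comm a b := by
    ext φ x
    simpa using congrArg φ (congrFun (congrArg DFunLike.coe (M.lr_comm b a)) x)

/-- A continuous derivation from `A` into the bimodule `X`. -/
def IsDerivation (M : BanachBimod A X) (D : A →L[ℂ] X) : Prop :=
  ∀ a b, D (a * b) = M.l a (D b) + M.r b (D a)

/-- `D` is inner. -/
def Inner (M : BanachBimod A X) (D : A →L[ℂ] X) : Prop :=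
  ∃ x : X, ∀ a, D a = M.l a x - M.r a x

/-- `D` is approximately inner: some net of inner derivations converges to `D` pointwise
in norm. -/
def ApproxInner (M : BanachBimod A X) (D : A →L[ℂ] X) : Prop :=
  ∃ (ι : Type) (φ : Filter ι) (x : ι → X), φ.NeBot ∧
    ∀ a, Tendsto (fun i => M.l a (x i) - M.r a (x i)) φ (𝓝 (D a))

/-- `D` is sequentially approximately inner. -/
def SeqApproxInner (M : BanachBimod A X) (D : A →L[ℂ] X) : Prop :=
  ∃ x : ℕ → X, ∀ a, Tendsto (fun n => M.l a (x n) - M.r a (x n)) atTop (𝓝 (D a))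

/-- `D` is boundedly approximately inner: the approximating net of inner derivations is
bounded as a net of operators from `A` to `X`. -/
def BddApproxInner (M : BanachBimod A X) (D : A →L[ℂ] X) : Prop :=
  ∃ (ι : Type) (φ : Filter ι) (x : ι → X), φ.NeBot ∧
    (∃ C : ℝ, ∀ i a, ‖M.l a (x i) - M.r a (x i)‖ ≤ C * ‖a‖) ∧
    ∀ a, Tendsto (fun i => M.l a (x i) - M.r a (x i)) φ (𝓝 (D a))

/-- `D` is uniformly approximately inner: inner derivations approximate `D` uniformly
on the unit ball of `A`, i.e. in operator norm. -/
def UnifApproxInner (M : BanachBimod A X) (D : A →L[ℂ] X) : Prop :=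
  ∃ (ι : Type) (φ : Filter ι) (x : ι → X), φ.NeBot ∧
    ∀ ε > (0 : ℝ), ∀ᶠ i in φ, ∀ a, ‖D a - (M.l a (x i) - M.r a (x i))‖ ≤ ε * ‖a‖

/-- A derivation into the dual module `X →L[ℂ] ℂ` is weak* approximately inner. -/
def WeakStarApproxInner (M : BanachBimod A X) (D : A →L[ℂ] (X →L[ℂ] ℂ)) : Prop :=
  ∃ (ι : Type) (φ : Filter ι) (x : ι → (X →L[ℂ] ℂ)), φ.NeBot ∧
    ∀ (a : A) (ξ : X),
      Tendsto (fun i => (M.dual.l a (x i) - M.dual.r a (x i)) ξ) φ (𝓝 (D a ξ))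

end BanachBimod

variable (A)

/-- `A` is contractible: every continuous derivation into every Banach `A`-bimodule is inner. -/
def Contractible : Prop :=
  ∀ (X : Type) (_ : NormedAddCommGroup X) (_ : NormedSpace ℂ X) (M : BanachBimod A X)
    (D : A →L[ℂ] X), M.IsDerivation D → M.Inner D

def ApproximatelyContractible : Prop :=
  ∀ (X : Type) (_ : NormedAddCommGroup X) (_ : NormedSpace ℂ X) (M : BanachBimod A X)
    (D : A →L[ℂ] X), M.IsDerivation D → M.ApproxInner D

def SeqApproximatelyContractible : Prop :=
  ∀ (X : Type) (_ : NormedAddCommGroup X) (_ : NormedSpace ℂ X) (M : BanachBimod A X)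
    (D : A →L[ℂ] X), M.IsDerivation D → M.SeqApproxInner D

def UnifApproximatelyContractible : Prop :=
  ∀ (X : Type) (_ : NormedAddCommGroup X) (_ : NormedSpace ℂ X) (M : BanachBimod A X)
    (D : A →L[ℂ] X), M.IsDerivation D → M.UnifApproxInner D

def ApproximatelyAmenable : Prop :=
  ∀ (X : Type) (_ : NormedAddCommGroup X) (_ : NormedSpace ℂ X) (M : BanachBimod A X)
    (D : A →L[ℂ] (X →L[ℂ] ℂ)), M.dual.IsDerivation D → M.dual.ApproxInner D

def SeqApproximatelyAmenable : Prop :=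
  ∀ (X : Type) (_ : NormedAddCommGroup X) (_ : NormedSpace ℂ X) (M : BanachBimod A X)
    (D : A →L[ℂ] (X →L[ℂ] ℂ)), M.dual.IsDerivation D → M.dual.SeqApproxInner D

def BddApproximatelyAmenable : Prop :=
  ∀ (X : Type) (_ : NormedAddCommGroup X) (_ : NormedSpace ℂ X) (M : BanachBimod A X)
    (D : A →L[ℂ] (X →L[ℂ] ℂ)), M.dual.IsDerivation D → M.dual.BddApproxInner D

def WeakStarApproximatelyAmenable : Prop :=
  ∀ (X : Type) (_ : NormedAddCommGroup X) (_ : NormedSpace ℂ X) (M : BanachBimod A X)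
    (D : A →L[ℂ] (X →L[ℂ] ℂ)), M.dual.IsDerivation D → M.WeakStarApproxInner D


/-- The projective tensor "seminorm" on the algebraic tensor product `V ⊗[ℂ] W`, relative to
given (semi)norm functions on the factors: the infimum of `∑ να aₙ * νβ bₙ` over all
representations `t = ∑ aₙ ⊗ bₙ`. -/
def projTensorSN {V W : Type} [AddCommGroup V] [Module ℂ V] [AddCommGroup W] [Module ℂ W]
    (να : V → ℝ) (νβ : W → ℝ) (t : V ⊗[ℂ] W) : ℝ :=
  sInf {r : ℝ | ∃ L : List (V × W), t = (L.map fun p => p.1 ⊗ₜ[ℂ] p.2).sum ∧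
      r = (L.map fun p => να p.1 * νβ p.2).sum}

section SN

variable (C : Type) [NonUnitalRing C] [Module ℂ C] [IsScalarTower ℂ C C] [SMulCommClass ℂ C C]

/-- The left action `u ↦ a·u` of `C` on `C ⊗[ℂ] C`. -/
def tactL (a : C) : C ⊗[ℂ] C →ₗ[ℂ] C ⊗[ℂ] C :=
  TensorProduct.map (LinearMap.mulLeft ℂ a) LinearMap.id

/-- The right action `u ↦ u·a` of `C` on `C ⊗[ℂ] C`. -/
def tactR (a : C) : C ⊗[ℂ] C →ₗ[ℂ] C ⊗[ℂ] C :=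
  TensorProduct.map LinearMap.id (LinearMap.mulRight ℂ a)

/-- The multiplication map `π : C ⊗ C → C`. -/
def tpi : C ⊗[ℂ] C →ₗ[ℂ] C := LinearMap.mul' ℂ C

variable (ν : C → ℝ)

/-- Pseudo-amenability of the algebra `C` relative to the (semi)norm function `ν`:
there is an approximate diagonal, i.e. a net `(u_i) ⊂ C ⊗̂ C` with
`a·u_i − u_i·a → 0` (in the projective tensor seminorm) and `π(u_i)a → a` for all `a ∈ C`. -/
def PseudoAmenableSN : Prop :=
  ∃ (ι : Type) (φ : Filter ι) (u : ι → C ⊗[ℂ] C), φ.NeBot ∧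
    (∀ a : C, Tendsto (fun i => projTensorSN ν ν (tactL C a (u i) - tactR C a (u i))) φ (𝓝 0)) ∧
    (∀ a : C, Tendsto (fun i => ν (tpi C (u i) * a - a)) φ (𝓝 0))

/-- Sequential pseudo-amenability. -/
def SeqPseudoAmenableSN : Prop :=
  ∃ u : ℕ → C ⊗[ℂ] C,
    (∀ a : C, Tendsto (fun n => projTensorSN ν ν (tactL C a (u n) - tactR C a (u n))) atTop (𝓝 0)) ∧
    (∀ a : C, Tendsto (fun n => ν (tpi C (u n) * a - a)) atTop (𝓝 0))

/-- Pseudo-contractibility: there is a central approximate diagonal. -/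
def PseudoContractibleSN : Prop :=
  ∃ (ι : Type) (φ : Filter ι) (u : ι → C ⊗[ℂ] C), φ.NeBot ∧
    (∀ (a : C) i, tactL C a (u i) = tactR C a (u i)) ∧
    (∀ a : C, Tendsto (fun i => ν (tpi C (u i) * a - a)) φ (𝓝 0))

/-- Bounded pseudo-contractibility: a central approximate diagonal `(u_i)` such that
`(π(u_i))` is a multiplier-bounded approximate identity. -/
def BddPseudoContractibleSN : Prop :=
  ∃ (ι : Type) (φ : Filter ι) (u : ι → C ⊗[ℂ] C), φ.NeBot ∧
    (∀ (a : C) i, tactL C a (u i) = tactR C a (u i)) ∧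
    (∀ a : C, Tendsto (fun i => ν (tpi C (u i) * a - a)) φ (𝓝 0)) ∧
    (∃ K : ℝ, 0 < K ∧ ∀ i (a : C), ν (tpi C (u i) * a) ≤ K * ν a)

end SN

section Normed

variable (A : Type) [NonUnitalNormedRing A] [NormedSpace ℂ A]
  [IsScalarTower ℂ A A] [SMulCommClass ℂ A A]

def PseudoAmenable : Prop := PseudoAmenableSN A (fun a => ‖a‖)
def SeqPseudoAmenable : Prop := SeqPseudoAmenableSN A (fun a => ‖a‖)
def PseudoContractible : Prop := PseudoContractibleSN A (fun a => ‖a‖)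
def BddPseudoContractible : Prop := BddPseudoContractibleSN A (fun a => ‖a‖)

/-- `A` has a (two-sided) approximate identity. -/
def HasApproxIdentity : Prop :=
  ∃ (ι : Type) (φ : Filter ι) (e : ι → A), φ.NeBot ∧
    ∀ a : A, Tendsto (fun i => e i * a) φ (𝓝 a) ∧ Tendsto (fun i => a * e i) φ (𝓝 a)

/-- `A` has a bounded (two-sided) approximate identity. -/
def HasBoundedApproxIdentity : Prop :=
  ∃ (ι : Type) (φ : Filter ι) (e : ι → A), φ.NeBot ∧ (∃ C : ℝ, ∀ i, ‖e i‖ ≤ C) ∧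
    ∀ a : A, Tendsto (fun i => e i * a) φ (𝓝 a) ∧ Tendsto (fun i => a * e i) φ (𝓝 a)

/-- `A` has a left approximate identity. -/
def HasLeftApproxIdentity : Prop :=
  ∃ (ι : Type) (φ : Filter ι) (e : ι → A), φ.NeBot ∧
    ∀ a : A, Tendsto (fun i => e i * a) φ (𝓝 a)

/-- `A` has a right approximate identity. -/
def HasRightApproxIdentity : Prop :=
  ∃ (ι : Type) (φ : Filter ι) (e : ι → A), φ.NeBot ∧
    ∀ a : A, Tendsto (fun i => a * e i) φ (𝓝 a)

/-- `A` has a central approximate identity. -/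
def HasCentralApproxIdentity : Prop :=
  ∃ (ι : Type) (φ : Filter ι) (e : ι → A), φ.NeBot ∧
    (∀ (a : A) i, a * e i = e i * a) ∧
    ∀ a : A, Tendsto (fun i => e i * a) φ (𝓝 a)

/-- `A` is approximately biprojective: there is a net `(T_α)` of bounded `A`-bimodule morphisms
`A → A ⊗̂ A` with `π ∘ T_α (a) → a` for every `a`. -/
def ApproxBiprojective : Prop :=
  ∃ (ι : Type) (φ : Filter ι) (T : ι → (A →ₗ[ℂ] A ⊗[ℂ] A)), φ.NeBot ∧
    (∀ i, ∃ C : ℝ, ∀ a, projTensorSN (fun x : A => ‖x‖) (fun x : A => ‖x‖) (T i a) ≤ C * ‖a‖) ∧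
    (∀ i (a b : A), T i (a * b) = tactL A a (T i b) ∧ T i (a * b) = tactR A b (T i a)) ∧
    (∀ a : A, Tendsto (fun i => tpi A (T i a)) φ (𝓝 a))

end Normed


end


section AuxRAI

variable {A : Type} [NonUnitalNormedRing A] [NormedSpace ℂ A]
  [IsScalarTower ℂ A A] [SMulCommClass ℂ A A]

private lemma auxRAI_exists_list_repr (t : A ⊗[ℂ] A) :
    ∃ L : List (A × A), t = (L.map fun p => p.1 ⊗ₜ[ℂ] p.2).sum := by
  induction t using TensorProduct.induction_on with
  | zero => exact ⟨[], by simp⟩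
  | tmul a b => exact ⟨[(a, b)], by simp⟩
  | add x y hx hy =>
    obtain ⟨L1, h1⟩ := hx; obtain ⟨L2, h2⟩ := hy
    exact ⟨L1 ++ L2, by simp [h1, h2]⟩

private lemma auxRAI_projSN_lt {t : A ⊗[ℂ] A} {δ : ℝ}
    (h : projTensorSN (fun x : A => ‖x‖) (fun x : A => ‖x‖) t < δ) :
    ∃ L : List (A × A), t = (L.map fun p => p.1 ⊗ₜ[ℂ] p.2).sum ∧
      (L.map fun p => ‖p.1‖ * ‖p.2‖).sum < δ := by
  have hne : {r : ℝ | ∃ L : List (A × A), t = (L.map fun p => p.1 ⊗ₜ[ℂ] p.2).sum ∧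
      r = (L.map fun p => ‖p.1‖ * ‖p.2‖).sum}.Nonempty := by
    obtain ⟨L, hL⟩ := auxRAI_exists_list_repr t
    exact ⟨_, L, hL, rfl⟩
  have hbd : BddBelow {r : ℝ | ∃ L : List (A × A), t = (L.map fun p => p.1 ⊗ₜ[ℂ] p.2).sum ∧
      r = (L.map fun p => ‖p.1‖ * ‖p.2‖).sum} := by
    refine ⟨0, fun r hr => ?_⟩
    obtain ⟨L, -, rfl⟩ := hr
    refine List.sum_nonneg fun x hx => ?_
    obtain ⟨p, -, rfl⟩ := List.mem_map.mp hx
    positivity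
  obtain ⟨r, ⟨L, hL, rfl⟩, hr⟩ := (csInf_lt_iff hbd hne).mp h
  exact ⟨L, hL, hr⟩

private lemma auxRAI_tendsto_list_sum {κ : Type} {ψ : Filter κ} (L : List (A × A))
    (f : A × A → κ → A) (g : A × A → A)
    (h : ∀ p ∈ L, Filter.Tendsto (f p) ψ (𝓝 (g p))) :
    Filter.Tendsto (fun lam => (L.map fun p => f p lam).sum) ψ (𝓝 (L.map g).sum) := by
  induction L with
  | nil => simpa using tendsto_const_nhds
  | cons p L ih =>
    simp only [List.map_cons, List.sum_cons]
    exact ((h p List.mem_cons_self).add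
      (ih fun q hq => h q (List.mem_cons_of_mem _ hq)))

private lemma auxRAI_key (hA : PseudoAmenable A) (J : Submodule ℂ A)
    (hJl : ∀ a x : A, x ∈ J → a * x ∈ J)
    (hcompl : ∃ C : ℝ, ∃ (κ : Type) (ψ : Filter κ) (P : κ → (A →L[ℂ] A)), ψ.NeBot ∧
      (∀ lam, ‖P lam‖ ≤ C) ∧ (∀ lam a, P lam a ∈ J) ∧
      ∀ x ∈ J, Filter.Tendsto (fun lam => P lam x) ψ (𝓝 x))
    (F : Finset A) (hF : ∀ x ∈ F, x ∈ J) {ε : ℝ} (hε : 0 < ε) :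
    ∃ e, e ∈ J ∧ ∀ x ∈ F, ‖x * e - x‖ < ε := by
  obtain ⟨C, κ, ψ, P, hψ, hPC, hPJ, hPlim⟩ := hcompl
  obtain ⟨ι, φ, u, hφ, hdiag, hpi⟩ := hA
  have hC0 : 0 ≤ C := by
    obtain ⟨lam⟩ := hψ.nonempty
    exact (norm_nonneg (P lam)).trans (hPC lam)
  set δ : ℝ := ε / (3 * (C + 1)) with hδdef
  have hδ : 0 < δ := by positivity
  -- choose i
  have hev : ∀ᶠ i in φ, ∀ x ∈ F,
      projTensorSN (fun x : A => ‖x‖) (fun x : A => ‖x‖)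
        (tactL A x (u i) - tactR A x (u i)) < δ ∧ ‖tpi A (u i) * x - x‖ < ε / 3 := by
    rw [Filter.eventually_all_finset]
    intro x _
    have h1 := (hdiag x).eventually (eventually_lt_nhds hδ)
    have h2 : Filter.Tendsto (fun i => ‖tpi A (u i) * x - x‖) φ (𝓝 0) := hpi x
    have h2' := h2.eventually (eventually_lt_nhds (by positivity : (0:ℝ) < ε / 3))
    exact h1.and h2'
  obtain ⟨i, hi⟩ := hev.exists
  -- the maps Q lam = π ∘ (id ⊗ P lam)
  set Q : κ → (A ⊗[ℂ] A →ₗ[ℂ] A) := fun lam =>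
    (tpi A).comp (TensorProduct.map LinearMap.id ((P lam) : A →ₗ[ℂ] A)) with hQdef
  have hQtmul : ∀ lam (a b : A), Q lam (a ⊗ₜ[ℂ] b) = a * P lam b := by
    intro lam a b
    simp [hQdef, tpi]
  have hQmem : ∀ lam (t : A ⊗[ℂ] A), Q lam t ∈ J := by
    intro lam t
    induction t using TensorProduct.induction_on with
    | zero => simpa using J.zero_mem
    | tmul a b => rw [hQtmul]; exact hJl a _ (hPJ lam b)
    | add x y hx hy => rw [map_add]; exact J.add_mem hx hy
  have hQnorm : ∀ lam (L : List (A × A)),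
      ‖Q lam ((L.map fun p => p.1 ⊗ₜ[ℂ] p.2).sum)‖ ≤ C * (L.map fun p => ‖p.1‖ * ‖p.2‖).sum := by
    intro lam L
    induction L with
    | nil => simp
    | cons p L ih =>
      simp only [List.map_cons, List.sum_cons, map_add]
      refine (norm_add_le _ _).trans ?_
      rw [mul_add]
      refine add_le_add ?_ ih
      rw [hQtmul]
      calc ‖p.1 * P lam p.2‖ ≤ ‖p.1‖ * ‖P lam p.2‖ := norm_mul_le _ _
        _ ≤ ‖p.1‖ * (C * ‖p.2‖) := by
            refine mul_le_mul_of_nonneg_left ?_ (norm_nonneg _)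
            exact ((P lam).le_opNorm _).trans
              (mul_le_mul_of_nonneg_right (hPC lam) (norm_nonneg _))
        _ = C * (‖p.1‖ * ‖p.2‖) := by ring
  have hQL : ∀ lam (x : A) (t : A ⊗[ℂ] A), Q lam (tactL A x t) = x * Q lam t := by
    intro lam x t
    induction t using TensorProduct.induction_on with
    | zero => simp
    | tmul a b =>
      simp only [tactL, TensorProduct.map_tmul, LinearMap.mulLeft_apply, LinearMap.id_coe,
        id_eq, hQtmul, mul_assoc]
    | add s t hs ht => rw [map_add, map_add, map_add, hs, ht, mul_add]
  have htpiR : ∀ (x : A) (t : A ⊗[ℂ] A), tpi A (tactR A x t) = tpi A t * x := by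
    intro x t
    induction t using TensorProduct.induction_on with
    | zero => simp
    | tmul a b =>
      simp only [tactR, TensorProduct.map_tmul, LinearMap.mulRight_apply, LinearMap.id_coe,
        id_eq, tpi, LinearMap.mul'_apply, mul_assoc]
    | add s t hs ht => rw [map_add, map_add, map_add, hs, ht, add_mul]
  -- representation of u i
  obtain ⟨L0, hL0⟩ := auxRAI_exists_list_repr (u i)
  -- choose lam
  have hevlam : ∀ᶠ lam in ψ, ∀ x ∈ F,
      ‖Q lam (tactR A x (u i)) - tpi A (u i) * x‖ < ε / 3 := by
    rw [Filter.eventually_all_finset]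
    intro x hx
    have hxJ := hF x hx
    have hRsum : tactR A x (u i) = (L0.map fun p => p.1 ⊗ₜ[ℂ] (p.2 * x)).sum := by
      rw [hL0, map_list_sum]
      congr 1
      rw [List.map_map]
      refine List.map_congr_left fun p _ => ?_
      simp [tactR]
    have htend : Filter.Tendsto (fun lam => Q lam (tactR A x (u i))) ψ
        (𝓝 (tpi A (u i) * x)) := by
      have h1 : ∀ lam, Q lam (tactR A x (u i)) =
          (L0.map fun p => p.1 * P lam (p.2 * x)).sum := by
        intro lam
        rw [hRsum, map_list_sum, List.map_map]
        congr 1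
      have h2 : tpi A (u i) * x = (L0.map fun p => p.1 * (p.2 * x)).sum := by
        rw [← htpiR x (u i), hRsum, map_list_sum, List.map_map]
        congr 1
      rw [h2]
      simp only [h1]
      refine auxRAI_tendsto_list_sum L0 (fun p lam => p.1 * P lam (p.2 * x))
        (fun p => p.1 * (p.2 * x)) fun p _ => ?_
      exact Filter.Tendsto.const_mul p.1 (hPlim (p.2 * x) (hJl p.2 x hxJ))
    have hnorm := tendsto_iff_norm_sub_tendsto_zero.mp htend
    exact hnorm.eventually (eventually_lt_nhds (by positivity : (0:ℝ) < ε / 3))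
  obtain ⟨lam, hlam⟩ := hevlam.exists
  refine ⟨Q lam (u i), hQmem lam (u i), fun x hx => ?_⟩
  obtain ⟨hsn, hpix⟩ := hi x hx
  -- term 1 bound
  obtain ⟨Lx, hLx, hSx⟩ := auxRAI_projSN_lt hsn
  have hterm1 : ‖Q lam (tactL A x (u i) - tactR A x (u i))‖ ≤ ε / 3 := by
    rw [hLx]
    refine (hQnorm lam Lx).trans ?_
    have h1 : C * (Lx.map fun p => ‖p.1‖ * ‖p.2‖).sum ≤ C * δ :=
      mul_le_mul_of_nonneg_left hSx.le hC0
    refine h1.trans ?_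
    have hC1 : (0:ℝ) < C + 1 := by linarith
    have h2 : (C + 1) * δ = ε / 3 := by
      rw [hδdef]; field_simp
    nlinarith [hδ.le]
  -- assemble
  have hsplit : x * Q lam (u i) - x =
      Q lam (tactL A x (u i) - tactR A x (u i)) +
      (Q lam (tactR A x (u i)) - tpi A (u i) * x) + (tpi A (u i) * x - x) := by
    rw [map_sub, hQL]
    abel
  calc ‖x * Q lam (u i) - x‖ ≤
      ‖Q lam (tactL A x (u i) - tactR A x (u i))‖ +
      ‖Q lam (tactR A x (u i)) - tpi A (u i) * x‖ + ‖tpi A (u i) * x - x‖ := by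
        rw [hsplit]
        exact (norm_add_le _ _).trans (add_le_add_left (norm_add_le _ _) _)
    _ < ε / 3 + ε / 3 + ε / 3 := by
        have h3 := hlam x hx
        linarith [hterm1, hpix]
    _ = ε := by ring

end AuxRAI

/-- Let `A` be a pseudo-amenable Banach algebra and `J` a closed left ideal of
`A`. If `J` is boundedly approximately complemented in `A`, then `J` has a right approximate
identity. -/
theorem pseudoAmenable_bddApproxComplemented_ideal_rai
    (A : Type) [NonUnitalNormedRing A] [NormedSpace ℂ A]
    [IsScalarTower ℂ A A] [SMulCommClass ℂ A A] [CompleteSpace A]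
    (hA : PseudoAmenable A)
    (J : Submodule ℂ A) (hJc : IsClosed (J : Set A))
    (hJl : ∀ a x : A, x ∈ J → a * x ∈ J)
    (hcompl : ∃ C : ℝ, ∃ (κ : Type) (ψ : Filter κ) (P : κ → (A →L[ℂ] A)), ψ.NeBot ∧
      (∀ lam, ‖P lam‖ ≤ C) ∧ (∀ lam a, P lam a ∈ J) ∧
      ∀ x ∈ J, Tendsto (fun lam => P lam x) ψ (𝓝 x)) :
    ∃ (ι : Type) (φ : Filter ι) (e : ι → A), φ.NeBot ∧ (∀ i, e i ∈ J) ∧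
      ∀ x ∈ J, Tendsto (fun i => x * e i) φ (𝓝 x) := by
  classical
  set JS := {x : A // x ∈ J}
  have hsel : ∀ (s : Finset JS) (n : ℕ), ∃ e, e ∈ J ∧
      ∀ x ∈ s.image Subtype.val, ‖x * e - x‖ < ((n : ℝ) + 1)⁻¹ := by
    intro s n
    refine auxRAI_key hA J hJl hcompl (s.image Subtype.val) ?_ (by positivity)
    intro x hx
    obtain ⟨⟨y, hy⟩, -, rfl⟩ := Finset.mem_image.mp hx
    exact hy
  choose e he1 he2 using hsel
  refine ⟨Finset JS × ℕ, Filter.atTop, fun p => e p.1 p.2, ?_, fun p => he1 p.1 p.2, ?_⟩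
  · rw [Filter.atTop_neBot_iff]
    refine ⟨⟨(∅, 0)⟩, ⟨fun p q => ⟨(p.1 ∪ q.1, max p.2 q.2), ?_, ?_⟩⟩⟩
    · exact ⟨Finset.subset_union_left, le_max_left _ _⟩
    · exact ⟨Finset.subset_union_right, le_max_right _ _⟩
  · intro x hx
    rw [Metric.tendsto_nhds]
    intro ε hε
    obtain ⟨N, hN⟩ := exists_nat_gt ε⁻¹
    have hNε : ((N : ℝ) + 1)⁻¹ < ε := by
      rw [inv_lt_comm₀ (by positivity) hε]
      exact hN.trans (by linarith)
    have hmem : Set.Ici (({⟨x, hx⟩} : Finset JS), N) ∈ (Filter.atTop : Filter (Finset JS × ℕ)) :=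
      Filter.Ici_mem_atTop _
    filter_upwards [hmem] with p hp
    obtain ⟨hp1, hp2⟩ := hp
    have hxmem : x ∈ p.1.image Subtype.val := by
      refine Finset.mem_image.mpr ⟨⟨x, hx⟩, ?_, rfl⟩
      exact hp1 (Finset.mem_singleton_self _)
    have h1 := he2 p.1 p.2 x hxmem
    have h2 : ((p.2 : ℝ) + 1)⁻¹ ≤ ((N : ℝ) + 1)⁻¹ := by
      apply inv_anti₀ (by positivity)
      have h3 : (N : ℝ) ≤ (p.2 : ℝ) := Nat.cast_le.mpr hp2
      linarith
    rw [dist_eq_norm]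
    exact h1.trans_le (h2.trans hNε.le)
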